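/- arXiv:2507.15331 — 2 statements merged into one kernel-verified Lean document; each statement's English description precedes it below -/
import Mathlib

section
/- Transfer impedances of an admittance matrix satisfy the Jacobi-type identity T_{pq,jk} + T_{jp,qk} + T_{qj,pk} = 0 for all indices p, q, j, k. -/
/-!
Write `C_{ab,cd}` as the determinant of `Y` with rows `a, b` replaced by the unit rows `e_c, e_d`.
For distinct `p, q, j`, fix `e_k` in row `q` and let `Φ(x, z)` be the determinant with rows `p, j`
replaced by `x, z`. Cyclically permuting rows turns the three terms into `Φ(e_x, Y_x)` for
`x = j, q, p`, while `Φ(e_r, Y_r) = 0` for every other `r` because row `r` is then repeated.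
Hence the sum is `∑_{r,s} Y_{rs} Φ(e_r, e_s)`, which vanishes since `Y` is symmetric and `Φ` is
alternating.
-/

def cof1 {n : ℕ} {F : Type*} [CommRing F] (Y : Matrix (Fin (n + 1)) (Fin (n + 1)) F)
    (j k : Fin (n + 1)) : F :=
  (-1 : F) ^ (j.val + k.val) * (Y.submatrix j.succAbove k.succAbove).det

/-- Index of `p` in the minor obtained by deleting index `j` (for `p ≠ j`). -/
def delIdx {n : ℕ} (j p : Fin (n + 2)) : Fin (n + 1) :=
  ⟨if j.val < p.val then p.val - 1 else min p.val n, by split <;> omega⟩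

/-- The second cofactor `C_{ab,cd}(Y)`: rows `a, b` and columns `c, d` deleted, with the sign
`(-1)^(σ(a,b)+σ(c,d))`, realized recursively as `(-1)^(a+c)` times the first cofactor of the
`(a,c)` minor at the shifted indices; zero by convention when `a = b` or `c = d`. -/
def cof2 {n : ℕ} {F : Type*} [CommRing F] (Y : Matrix (Fin (n + 2)) (Fin (n + 2)) F)
    (a b c d : Fin (n + 2)) : F :=
  if a = b ∨ c = d then 0 else
    (-1 : F) ^ (a.val + c.val) *
      cof1 (Y.submatrix a.succAbove c.succAbove) (delIdx a b) (delIdx c d)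

open Matrix

theorem Fintype.sum_sum_mul_eq_zero_of_symm_of_alt {ι R : Type*} [Fintype ι]
    [NonUnitalNonAssocRing R] {A B : ι → ι → R} (hA : ∀ i j, A i j = A j i)
    (hB : ∀ i j, B i j = -B j i) (hB₀ : ∀ i, B i i = 0) :
    ∑ i, ∑ j, A i j * B i j = 0 := by
  rw [← Finset.sum_product']
  refine Finset.sum_ninvolution Prod.swap (fun ⟨i, j⟩ => ?_) (fun ⟨i, j⟩ hne heq => ?_)
    (fun _ => Finset.mem_univ _) Prod.swap_swap
  · simp [hA j i, hB j i]
  · obtain rfl : i = j := congrArg Prod.fst heq.symm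
    simp [hB₀] at hne

namespace Matrix

theorem submatrix_updateRow_of_injective {l m n o α : Type*} [DecidableEq l]
    [DecidableEq m] (M : Matrix m n α) {f : l → m} (hf : Function.Injective f) (g : o → n)
    (k : l) (v : n → α) :
    (M.updateRow (f k) v).submatrix f g = (M.submatrix f g).updateRow k (v ∘ g) := by
  ext r s
  simp [updateRow_apply, hf.eq_iff]

variable {R : Type*} [CommRing R] {ι : Type*} [Fintype ι] [DecidableEq ι]

theorem det_updateRow_updateRow_swap (M : Matrix ι ι R) {a b : ι} (hab : a ≠ b)
    (x y : ι → R) :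
    ((M.updateRow a x).updateRow b y).det = -((M.updateRow a y).updateRow b x).det := by
  have hperm : (M.updateRow a x).updateRow b y
      = ((M.updateRow a y).updateRow b x).submatrix (Equiv.swap a b) id := by
    ext r s
    rcases eq_or_ne r a with rfl | hra
    · simp [updateRow_apply, hab]
    rcases eq_or_ne r b with rfl | hrb
    · simp [updateRow_apply, hab]
    · simp [updateRow_apply, hra, hrb, Equiv.swap_apply_of_ne_of_ne hra hrb]
  rw [hperm, det_permute, Equiv.Perm.sign_swap hab]
  simp

theorem det_updateRow_cycle (M : Matrix ι ι R) {a b c : ι} (hab : a ≠ b) (hbc : b ≠ c)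
    (hca : c ≠ a) (x y z : ι → R) :
    (((M.updateRow a x).updateRow b y).updateRow c z).det
      = (((M.updateRow b x).updateRow c y).updateRow a z).det := by
  have hperm : ((M.updateRow b x).updateRow c y).updateRow a z
      = (((M.updateRow a x).updateRow b y).updateRow c z).submatrix
          ((Equiv.swap a c).trans (Equiv.swap a b)) id := by
    ext r s
    simp only [submatrix_apply, Equiv.trans_apply, id, updateRow_apply, Equiv.swap_apply_def]
    split_ifs <;> simp_all
  rw [hperm, det_permute, Equiv.Perm.sign_trans, Equiv.Perm.sign_swap hca.symm,
    Equiv.Perm.sign_swap hab]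
  simp

theorem det_updateRow_eq_sum (M : Matrix ι ι R) (j : ι) (z : ι → R) :
    (M.updateRow j z).det = ∑ s, z s * (M.updateRow j (Pi.single s 1)).det := by
  simp_rw [← cramer_transpose_apply]
  have hz : z = ∑ s, z s • Pi.single s 1 := by
    ext t
    simp [Pi.single_apply]
  conv_lhs => rw [hz]
  simp only [map_sum, map_smul, Finset.sum_apply, Pi.smul_apply, smul_eq_mul]

theorem sum_det_updateRow_single_updateRow_row {Y : Matrix ι ι R} (hY : Y.IsSymm)
    (M : Matrix ι ι R) {p j : ι} (hpj : p ≠ j) :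
    ∑ r, ((M.updateRow p (Pi.single r 1)).updateRow j (Y r)).det = 0 := by
  simp_rw [det_updateRow_eq_sum _ j (Y _)]
  refine Fintype.sum_sum_mul_eq_zero_of_symm_of_alt (fun r s => hY.apply s r) (fun r s => ?_)
    (fun r => det_zero_of_row_eq hpj (by simp [hpj]))
  exact det_updateRow_updateRow_swap M hpj _ _

theorem det_updateRow_single_cyclic_sum {Y : Matrix ι ι R} (hY : Y.IsSymm) {p q j : ι}
    (hpq : p ≠ q) (hqj : q ≠ j) (hjp : j ≠ p) (w : ι → R) :
    ((Y.updateRow p (Pi.single j 1)).updateRow q w).det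
      + ((Y.updateRow j (Pi.single q 1)).updateRow p w).det
      + ((Y.updateRow q (Pi.single p 1)).updateRow j w).det = 0 := by
  set Φ : ι → R := fun r =>
    (((Y.updateRow p (Pi.single r 1)).updateRow q w).updateRow j (Y r)).det
  have hsum : ∑ r, Φ r = 0 := by
    simp only [Φ, updateRow_comm Y hpq]
    exact sum_det_updateRow_single_updateRow_row hY _ hjp.symm
  have hΦ : ∀ r ∉ ({p, q, j} : Finset ι), Φ r = 0 := by
    intro r hr
    simp only [Finset.mem_insert, Finset.mem_singleton, not_or] at hr
    exact det_zero_of_row_eq (i := j) (j := r) (Ne.symm hr.2.2) (by simp [hr.1, hr.2.1, hr.2.2])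
  rw [← Finset.sum_subset (Finset.subset_univ _) fun r _ => hΦ r,
    Finset.sum_insert (by simp [hpq, hjp.symm]), Finset.sum_pair hqj] at hsum
  have hTj : ((Y.updateRow p (Pi.single j 1)).updateRow q w).det = Φ j := by
    rw [← updateRow_eq_self ((Y.updateRow p (Pi.single j 1)).updateRow q w) j]
    simp only [Φ, updateRow_ne hjp, updateRow_ne hqj.symm]
  have hTq : ((Y.updateRow j (Pi.single q 1)).updateRow p w).det = Φ q := by
    rw [← updateRow_eq_self ((Y.updateRow j (Pi.single q 1)).updateRow p w) q,
      det_updateRow_cycle _ hjp hpq hqj]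
    simp only [Φ, updateRow_ne hpq.symm, updateRow_ne hqj]
  have hTp : ((Y.updateRow q (Pi.single p 1)).updateRow j w).det = Φ p := by
    rw [← updateRow_eq_self ((Y.updateRow q (Pi.single p 1)).updateRow j w) p,
      det_updateRow_cycle _ hqj hjp hpq, det_updateRow_cycle _ hjp hpq hqj]
    simp only [Φ, updateRow_ne hjp.symm, updateRow_ne hpq]
  rw [hTj, hTq, hTp]
  linear_combination hsum

end Matrix

variable {R : Type*} [CommRing R]

theorem succAbove_delIdx {n : ℕ} {a b : Fin (n + 2)} (h : a ≠ b) :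
    a.succAbove (delIdx a b) = b := by
  have h' : (a : ℕ) ≠ b := Fin.val_ne_of_ne h
  ext
  rcases h'.lt_or_gt with hab | hba
  · have hv : (delIdx a b : ℕ) = b - 1 := by simp only [delIdx]; split <;> omega
    rw [Fin.succAbove_of_le_castSucc _ _ (by rw [Fin.le_def, Fin.val_castSucc, hv]; omega),
      Fin.val_succ, hv]
    omega
  · have hv : (delIdx a b : ℕ) = b := by simp only [delIdx]; split <;> omega
    rw [Fin.succAbove_of_castSucc_lt _ _ (by rw [Fin.lt_def, Fin.val_castSucc, hv]; omega),
      Fin.val_castSucc, hv]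

theorem cof1_eq_det_updateRow {n : ℕ} (A : Matrix (Fin (n + 1)) (Fin (n + 1)) R)
    (i j : Fin (n + 1)) : cof1 A i j = (A.updateRow i (Pi.single j 1)).det := by
  rw [← adjugate_apply, adjugate_fin_succ_eq_det_submatrix, cof1, add_comm (i : ℕ)]

theorem cof2_eq_det_updateRow {n : ℕ} (Y : Matrix (Fin (n + 2)) (Fin (n + 2)) R)
    {a b : Fin (n + 2)} (hab : a ≠ b) (c d : Fin (n + 2)) :
    cof2 Y a b c d = ((Y.updateRow a (Pi.single c 1)).updateRow b (Pi.single d 1)).det := by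
  rcases eq_or_ne c d with rfl | hcd
  · rw [cof2, if_pos (Or.inr rfl), det_zero_of_row_eq hab (by simp [hab])]
  have hsub : (Y.submatrix a.succAbove c.succAbove).updateRow (delIdx a b)
      (Pi.single (delIdx c d) 1)
        = (Y.updateRow b (Pi.single d 1)).submatrix a.succAbove c.succAbove := by
    conv_rhs => rw [← succAbove_delIdx hab, ← succAbove_delIdx hcd]
    rw [submatrix_updateRow_of_injective _ Fin.succAbove_right_injective]
    exact congrArg _ (Function.update_comp_eq_of_injective (0 : Fin (n + 2) → R)
      Fin.succAbove_right_injective (delIdx c d) 1).symm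
  rw [cof2, if_neg (by tauto), cof1_eq_det_updateRow, hsub, updateRow_comm _ hab,
    ← adjugate_apply, adjugate_fin_succ_eq_det_submatrix, add_comm (a : ℕ)]

theorem cof2_self_left {n : ℕ} (Y : Matrix (Fin (n + 2)) (Fin (n + 2)) R) (a c d : Fin (n + 2)) :
    cof2 Y a a c d = 0 :=
  if_pos (Or.inl rfl)

theorem cof2_swap_left {n : ℕ} (Y : Matrix (Fin (n + 2)) (Fin (n + 2)) R)
    (a b c d : Fin (n + 2)) : cof2 Y b a c d = -cof2 Y a b c d := by
  rcases eq_or_ne a b with rfl | hab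
  · rw [cof2_self_left, neg_zero]
  rw [cof2_eq_det_updateRow Y hab.symm, cof2_eq_det_updateRow Y hab, updateRow_comm _ hab.symm,
    det_updateRow_updateRow_swap _ hab]

theorem cof2_cyclic_sum {n : ℕ} {Y : Matrix (Fin (n + 2)) (Fin (n + 2)) R} (hY : Y.IsSymm)
    (p q j k : Fin (n + 2)) : cof2 Y p q j k + cof2 Y j p q k + cof2 Y q j p k = 0 := by
  rcases eq_or_ne p q with rfl | hpq
  · rw [cof2_self_left, cof2_swap_left Y j p]
    ring
  rcases eq_or_ne q j with rfl | hqj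
  · rw [cof2_self_left, cof2_swap_left Y p q]
    ring
  rcases eq_or_ne j p with rfl | hjp
  · rw [cof2_self_left, cof2_swap_left Y q j]
    ring
  rw [cof2_eq_det_updateRow Y hpq, cof2_eq_det_updateRow Y hjp, cof2_eq_det_updateRow Y hqj]
  exact det_updateRow_single_cyclic_sum hY hpq hqj hjp _

theorem transfer_impedance_jacobi_general {n : ℕ}
    (Y : Matrix (Fin (n + 2)) (Fin (n + 2)) ℝ)
    (hsym : ∀ a b, Y a b = Y b a)
    (c : ℝ)
    (p q j k : Fin (n + 2)) :
    cof2 Y p q j k / c + cof2 Y j p q k / c + cof2 Y q j p k / c = 0 := by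
  rw [← add_div, ← add_div, cof2_cyclic_sum (IsSymm.ext fun a b => hsym b a), zero_div]

/-- Jacobi-type identity for transfer impedances `T_{ab,cd} = C_{ab,cd}(Y)/c(Y)`:
`T_{pq,jk} + T_{jp,qk} + T_{qj,pk} = 0` for all indices `p, q, j, k`. -/
theorem transfer_impedance_jacobi {n : ℕ}
    (Y : Matrix (Fin (n + 2)) (Fin (n + 2)) ℝ)
    (hsym : ∀ a b, Y a b = Y b a)
    (hrow : ∀ a, ∑ b, Y a b = 0) (hcol : ∀ b, ∑ a, Y a b = 0)
    (hrank : Y.rank = n + 1)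
    (c : ℝ) (hc : ∀ a b, cof1 Y a b = c) (hc0 : c ≠ 0)
    (p q j k : Fin (n + 2)) :
    cof2 Y p q j k / c + cof2 Y j p q k / c + cof2 Y q j p k / c = 0 :=
  transfer_impedance_jacobi_general Y hsym c p q j k
end

section
/- For an augmented network obtained by adding a branch with admittance y₊ between existing nodes j and k, the common first cofactor of the new admittance matrix is c(Ȳ) = c(Y) + y₊·C_{jk,jk}(Y). -/
/-- Augmentation: the admittance matrix after adding a branch with admittance `yp` between
existing nodes `j` and `k`. -/
def augmentY {n : ℕ} (Y : Matrix (Fin (n + 2)) (Fin (n + 2)) ℝ) (j k : Fin (n + 2))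
    (yp : ℝ) : Matrix (Fin (n + 2)) (Fin (n + 2)) ℝ :=
  fun a b => Y a b +
    yp * ((if a = j then 1 else 0) - (if a = k then 1 else 0)) *
      ((if b = j then 1 else 0) - (if b = k then 1 else 0))

open Matrix

section Cofactor

variable {F : Type*} [CommRing F]

lemma cof1_self {n : ℕ} (A : Matrix (Fin (n + 1)) (Fin (n + 1)) F) (j : Fin (n + 1)) :
    cof1 A j j = (A.submatrix j.succAbove j.succAbove).det := by
  rw [cof1, Even.neg_one_pow ⟨j.val, rfl⟩, one_mul]

lemma cof1_transpose {n : ℕ} (A : Matrix (Fin (n + 1)) (Fin (n + 1)) F) (a b : Fin (n + 1)) :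
    cof1 Aᵀ b a = cof1 A a b := by
  rw [cof1, cof1, ← transpose_submatrix, det_transpose, Nat.add_comm]

lemma cof1_eq_of_sum_col_eq_zero {n : ℕ} (A : Matrix (Fin (n + 2)) (Fin (n + 2)) F)
    (hcol : ∀ b, ∑ a, A a b = 0) (a a' b : Fin (n + 2)) :
    cof1 A a b = cof1 A a' b := by
  have hsum : ∑ r, A.submatrix id b.succAbove r = 0 := by
    funext q
    exact (Finset.sum_apply q _ _).trans (hcol (b.succAbove q))
  have hdet := submatrix_succAbove_det_eq_negOnePow_submatrix_succAbove_det
    (A.submatrix id b.succAbove) hsum a a'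
  simp only [submatrix_submatrix, Function.comp_id, Function.id_comp] at hdet
  have hsq : (-1 : F) ^ a.val * (-1) ^ a.val = 1 := by
    rw [← pow_add, Even.neg_one_pow ⟨a.val, rfl⟩]
  rw [cof1, cof1, hdet, Units.smul_def, Int.negOnePow_sub, Units.val_mul, zsmul_eq_mul,
    Int.cast_mul, Int.cast_negOnePow_natCast, Int.cast_negOnePow_natCast, pow_add, pow_add]
  linear_combination (-1 : F) ^ b.val * (-1) ^ a'.val *
    (A.submatrix a'.succAbove b.succAbove).det * hsq

lemma cof1_eq_of_sum_row_eq_zero {n : ℕ} (A : Matrix (Fin (n + 2)) (Fin (n + 2)) F)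
    (hrow : ∀ a, ∑ b, A a b = 0) (a b b' : Fin (n + 2)) :
    cof1 A a b = cof1 A a b' := by
  rw [← cof1_transpose A, ← cof1_transpose A]
  exact cof1_eq_of_sum_col_eq_zero Aᵀ hrow b b' a

lemma adjugate_eq_cof1 {n : ℕ} (A : Matrix (Fin (n + 1)) (Fin (n + 1)) F)
    (i j : Fin (n + 1)) : adjugate A i j = cof1 A j i := by
  rw [adjugate_fin_succ_eq_det_submatrix, cof1]

lemma cof2_self {n : ℕ} (A : Matrix (Fin (n + 2)) (Fin (n + 2)) F) {j k : Fin (n + 2)}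
    (hjk : j ≠ k) :
    cof2 A j k j k = ((A.submatrix j.succAbove j.succAbove).submatrix
      (delIdx j k).succAbove (delIdx j k).succAbove).det := by
  rw [cof2, if_neg (by simpa using hjk), cof1_self, Even.neg_one_pow ⟨j.val, rfl⟩, one_mul]

end Cofactor

lemma succAbove_delIdx_s12 {n : ℕ} {j k : Fin (n + 2)} (hjk : j ≠ k) :
    j.succAbove (delIdx j k) = k := by
  have hne : j.val ≠ k.val := Fin.val_ne_of_ne hjk
  have hk := k.isLt
  by_cases hlt : j.val < k.val
  · rw [Fin.succAbove_of_le_castSucc _ _ (Fin.le_def.2 (by simp [delIdx, hlt]; omega))]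
    ext; simp [delIdx, hlt]; omega
  · rw [Fin.succAbove_of_castSucc_lt _ _ (Fin.lt_def.2 (by simp [delIdx, hlt]; omega))]
    ext; simp [delIdx, hlt]; omega

lemma det_add_single_self {ι R : Type*} [Fintype ι] [DecidableEq ι] [CommRing R]
    (M : Matrix ι ι R) (q : ι) (x : R) :
    (M + single q q x).det = M.det + x * adjugate M q q := by
  have hupdate : M + single q q x = M.updateRow q (M q + x • Pi.single q 1) := by
    ext i l
    by_cases hi : i = q
    · subst hi
      rcases eq_or_ne l i with rfl | hl
      · simp
      · simp [hl, Ne.symm hl]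
    · simp [hi, Ne.symm hi]
  rw [hupdate, det_updateRow_add, updateRow_eq_self, det_updateRow_smul, adjugate_apply]

section Augment

variable {n : ℕ} (Y : Matrix (Fin (n + 2)) (Fin (n + 2)) ℝ) (j k : Fin (n + 2)) (yp : ℝ)

lemma sum_augmentY_row (a : Fin (n + 2)) : ∑ b, augmentY Y j k yp a b = ∑ b, Y a b := by
  simp [augmentY, Finset.sum_add_distrib, ← Finset.mul_sum, Finset.sum_sub_distrib]

lemma sum_augmentY_col (b : Fin (n + 2)) : ∑ a, augmentY Y j k yp a b = ∑ a, Y a b := by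
  simp [augmentY, Finset.sum_add_distrib, ← Finset.sum_mul, ← Finset.mul_sum,
    Finset.sum_sub_distrib]

variable {j k}

lemma submatrix_augmentY_succAbove (hjk : j ≠ k) :
    (augmentY Y j k yp).submatrix j.succAbove j.succAbove =
      Y.submatrix j.succAbove j.succAbove + single (delIdx j k) (delIdx j k) yp := by
  have hk : ∀ p, j.succAbove p = k ↔ p = delIdx j k := fun p => by
    rw [← Fin.succAbove_right_inj (p := j), succAbove_delIdx_s12 hjk]
  ext p q
  simp only [augmentY, submatrix_apply, Matrix.add_apply, single_apply, Fin.succAbove_ne, hk,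
    if_false]
  split_ifs <;> grind

end Augment

theorem augment_first_cofactor_general {n : ℕ}
    (Y : Matrix (Fin (n + 2)) (Fin (n + 2)) ℝ)
    (hrow : ∀ a, ∑ b, Y a b = 0) (hcol : ∀ b, ∑ a, Y a b = 0)
    (j k : Fin (n + 2)) (hjk : j ≠ k) (yp : ℝ)
    (c : ℝ) (hc : ∀ a b, cof1 Y a b = c) :
    ∀ a b, cof1 (augmentY Y j k yp) a b = c + yp * cof2 Y j k j k := by
  intro a b
  have hrow' a := (sum_augmentY_row Y j k yp a).trans (hrow a)
  have hcol' b := (sum_augmentY_col Y j k yp b).trans (hcol b)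
  rw [cof1_eq_of_sum_row_eq_zero _ hrow' a b j, cof1_eq_of_sum_col_eq_zero _ hcol' a j j,
    ← hc j j, cof2_self Y hjk, cof1_self, cof1_self, submatrix_augmentY_succAbove Y yp hjk,
    det_add_single_self, adjugate_eq_cof1, cof1_self]

/-- For the network augmented by a branch of admittance `yp` between nodes `j ≠ k`, the
common first cofactor of the new admittance matrix is `c(Ȳ) = c(Y) + yp · C_{jk,jk}(Y)`. -/
theorem augment_first_cofactor {n : ℕ}
    (Y : Matrix (Fin (n + 2)) (Fin (n + 2)) ℝ)
    (hsym : ∀ a b, Y a b = Y b a)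
    (hrow : ∀ a, ∑ b, Y a b = 0) (hcol : ∀ b, ∑ a, Y a b = 0)
    (j k : Fin (n + 2)) (hjk : j ≠ k) (yp : ℝ)
    (c : ℝ) (hc : ∀ a b, cof1 Y a b = c) :
    ∀ a b, cof1 (augmentY Y j k yp) a b = c + yp * cof2 Y j k j k :=
  augment_first_cofactor_general Y hrow hcol j k hjk yp c hc
end
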